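/- Let Q be a nonempty coalition and let j, k be two players not in Q with n_j > n_k. Then swapping which of the two players federates with Q strictly decreases total cost when the larger player is removed to local learning: costw(Q ∪ {j}) + costw({k}) > costw(Q ∪ {k}) + costw({j}). -/

import Mathlib

open Finset

variable {ι : Type*}

/-- The expected error of player `j` in coalition `C`. -/
noncomputable def err [DecidableEq ι] (μ σ2 : ℝ) (n : ι → ℕ) (C : Finset ι) (j : ι) : ℝ :=
  μ / (∑ i ∈ C, (n i : ℝ)) +
    σ2 * ((∑ i ∈ C.erase j, (n i : ℝ) ^ 2) + (∑ i ∈ C.erase j, (n i : ℝ)) ^ 2) /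
      (∑ i ∈ C, (n i : ℝ)) ^ 2

/-- The weighted cost of a coalition `C`. -/
noncomputable def costw [DecidableEq ι] (μ σ2 : ℝ) (n : ι → ℕ) (C : Finset ι) : ℝ :=
  ∑ j ∈ C, (n j : ℝ) * err μ σ2 n C j

/-!
With `S = Σ n_i` and `T = Σ n_i²` over a coalition, its weighted cost is
`μ + σ² (S² - T) / S`. Adding a player with `a` samples to `Q` therefore costs
`μ + σ² (2aS + S² - T) / (a + S)`, which is strictly increasing in `a`: for `a > b` the
difference is `σ² (a - b) (S² + T) / ((a + S)(b + S)) > 0`. A singleton always costs `μ`.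
-/

section

variable [DecidableEq ι] (μ σ2 : ℝ) (n : ι → ℕ)

theorem costw_eq {C : Finset ι} (hC : ∑ i ∈ C, (n i : ℝ) ≠ 0) :
    costw μ σ2 n C =
      μ + σ2 * ((∑ i ∈ C, (n i : ℝ)) ^ 2 - ∑ i ∈ C, (n i : ℝ) ^ 2) / ∑ i ∈ C, (n i : ℝ) := by
  set S : ℝ := ∑ i ∈ C, (n i : ℝ) with hS
  set T : ℝ := ∑ i ∈ C, (n i : ℝ) ^ 2 with hT
  have summand_eq : ∀ x ∈ C, (n x : ℝ) * err μ σ2 n C x =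
      (μ / S + σ2 * (T + S ^ 2) / S ^ 2) * (n x : ℝ) - (2 * σ2 / S) * (n x : ℝ) ^ 2 := by
    intro x hx
    rw [err, sum_erase_eq_sub hx, sum_erase_eq_sub hx, ← hS, ← hT]
    field_simp
    ring
  rw [costw, sum_congr rfl summand_eq, sum_sub_distrib, ← mul_sum, ← mul_sum, ← hS, ← hT]
  field_simp
  ring

theorem costw_singleton {x : ι} (hx : n x ≠ 0) : costw μ σ2 n {x} = μ := by
  rw [costw_eq μ σ2 n (by simpa using hx)]
  simp

theorem costw_insert_lt_costw_insert (hσ : 0 < σ2) {Q : Finset ι}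
    (hQ : 0 < ∑ i ∈ Q, (n i : ℝ)) {j k : ι} (hj : j ∉ Q) (hk : k ∉ Q) (hjk : n k < n j) :
    costw μ σ2 n (insert k Q) < costw μ σ2 n (insert j Q) := by
  set S : ℝ := ∑ i ∈ Q, (n i : ℝ)
  have hT : 0 ≤ ∑ i ∈ Q, (n i : ℝ) ^ 2 := by positivity
  rw [costw_eq μ σ2 n (by rw [sum_insert hk]; positivity),
    costw_eq μ σ2 n (by rw [sum_insert hj]; positivity),
    sum_insert hj, sum_insert hj, sum_insert hk, sum_insert hk]
  have hgap : 0 < σ2 * (n j - n k) * (S ^ 2 + ∑ i ∈ Q, (n i : ℝ) ^ 2) := by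
    have : (0 : ℝ) < n j - n k := sub_pos.mpr (by exact_mod_cast hjk)
    positivity
  rw [add_lt_add_iff_left, div_lt_div_iff₀ (by positivity) (by positivity)]
  nlinarith

end

theorem swap_decreases_cost_general [DecidableEq ι] (μ σ2 : ℝ) (n : ι → ℕ)
    (hσ : 0 < σ2) (hn : ∀ i, 0 < n i)
    (Q : Finset ι) (hQ : Q.Nonempty) (j k : ι) (hj : j ∉ Q) (hk : k ∉ Q)
    (hjk : n k < n j) :
    costw μ σ2 n (insert j Q) + costw μ σ2 n {k} >
      costw μ σ2 n (insert k Q) + costw μ σ2 n {j} := by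
  have hS : 0 < ∑ i ∈ Q, (n i : ℝ) := sum_pos (fun i _ => by exact_mod_cast hn i) hQ
  rw [costw_singleton μ σ2 n (hn k).ne', costw_singleton μ σ2 n (hn j).ne']
  linarith [costw_insert_lt_costw_insert μ σ2 n hσ hS hj hk hjk]

/-- (Swapping.)  Let `Q` be a nonempty coalition and `j, k ∉ Q` with `n_j > n_k`.
Swapping which of the two players federates with `Q` strictly decreases total cost when
the larger player is removed to local learning:
`costw (Q ∪ {j}) + costw {k} > costw (Q ∪ {k}) + costw {j}`. -/
theorem swap_decreases_cost [DecidableEq ι] (μ σ2 : ℝ) (n : ι → ℕ)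
    (hμ : 0 < μ) (hσ : 0 < σ2) (hn : ∀ i, 0 < n i)
    (Q : Finset ι) (hQ : Q.Nonempty) (j k : ι) (hj : j ∉ Q) (hk : k ∉ Q)
    (hjk : n k < n j) :
    costw μ σ2 n (insert j Q) + costw μ σ2 n {k} >
      costw μ σ2 n (insert k Q) + costw μ σ2 n {j} :=
  swap_decreases_cost_general μ σ2 n hσ hn Q hQ j k hj hk hjk
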